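/- Let λ > 0 and n be real numbers, and let a, v be real numbers with v > 0, a > 0, and |v^λ − a| < v^λ. Then a^{n/λ} = ∑_{k=0}^∞ (−1)ᵏ · C(n/λ, k) · v^{n − kλ} · (v^λ − a)ᵏ; equivalently, a^{n/λ} = vⁿ − (n/λ)v^{n−λ}(v^λ−a) + (n/λ)((n−λ)/2λ)v^{n−2λ}(v^λ−a)² − (n/λ)((n−λ)/2λ)((n−2λ)/3λ)v^{n−3λ}(v^λ−a)³ + ⋯. -/

import Mathlib

/-! With `V = v ^ λ` and `x = (a - V) / V`, the hypothesis says `|x| < 1` and `a = V (1 + x)`, so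
`a ^ r = V ^ r (1 + x) ^ r` expands by the binomial series for `(1 + x) ^ r`; finally
`V ^ (n / λ - k) = v ^ (n - k λ)`. -/

/-- Generalized binomial coefficient `C(r, k) = (∏_{j=0}^{k-1} (r - j)) / k!`. -/
noncomputable def genBinom (r : ℝ) (k : ℕ) : ℝ :=
  (∏ j ∈ Finset.range k, (r - j)) / (Nat.factorial k : ℝ)

theorem genBinom_eq_ringChoose (r : ℝ) (k : ℕ) : genBinom r k = Ring.choose r k := by
  rw [Ring.choose_eq_smul, genBinom, ← Polynomial.aeval_eq_smeval, Polynomial.aeval_def,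
    ← Polynomial.eval_map, descPochhammer_map, descPochhammer_eval_eq_prod_range,
    smul_eq_mul, div_eq_inv_mul]

theorem hasSum_genBinom_mul_pow (r : ℝ) {x : ℝ} (hx : |x| < 1) :
    HasSum (fun k ↦ genBinom r k * x ^ k) ((1 + x) ^ r) := by
  have hx_mem : x ∈ Metric.eball (0 : ℝ) 1 := by
    simpa [Metric.mem_eball, edist_zero_right, ← ofReal_norm] using hx
  simpa [genBinom_eq_ringChoose, binomialSeries, FormalMultilinearSeries.ofScalars_apply_eq,
    mul_comm] using (Real.one_add_rpow_hasFPowerSeriesOnBall_zero (a := r)).hasSum hx_mem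

theorem hasSum_rpow_of_abs_sub_lt (r : ℝ) {a V : ℝ} (hV : 0 < V) (h : |V - a| < V) :
    HasSum (fun k : ℕ ↦ (-1) ^ k * genBinom r k * V ^ (r - k) * (V - a) ^ k) (a ^ r) := by
  set x := (a - V) / V with hx_def
  have hx : |x| < 1 := by
    rwa [abs_div, abs_of_pos hV, div_lt_one hV, abs_sub_comm]
  have ha : a = V * (1 + x) := by rw [hx_def]; field_simp; ring
  have h1x : 0 ≤ 1 + x := by linarith [neg_abs_le x]
  have hterm : ∀ k : ℕ, V ^ r * (genBinom r k * x ^ k) =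
      (-1) ^ k * genBinom r k * V ^ (r - k) * (V - a) ^ k := by
    intro k
    rw [Real.rpow_sub_natCast hV.ne', show x = -((V - a) / V) by ring, neg_pow, div_pow]
    field_simp
  simpa only [hterm, ← Real.mul_rpow hV.le h1x, ← ha] using
    (hasSum_genBinom_mul_pow r hx).mul_left (V ^ r)

theorem stmt_14_general (lam n : ℝ) (hlam : 0 < lam) (a v : ℝ) (hv : 0 < v)
    (h : |v ^ lam - a| < v ^ lam) :
    a ^ (n / lam) =
      ∑' k : ℕ, (-1) ^ k * genBinom (n / lam) k * v ^ (n - k * lam) * (v ^ lam - a) ^ k := by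
  rw [← (hasSum_rpow_of_abs_sub_lt (n / lam) (by positivity) h).tsum_eq]
  refine tsum_congr fun k ↦ ?_
  rw [← Real.rpow_mul hv.le]
  congr 3
  field_simp

theorem stmt_14 (lam n : ℝ) (hlam : 0 < lam) (a v : ℝ) (hv : 0 < v) (ha : 0 < a)
    (h : |v ^ lam - a| < v ^ lam) :
    a ^ (n / lam) =
      ∑' k : ℕ, (-1) ^ k * genBinom (n / lam) k * v ^ (n - k * lam) * (v ^ lam - a) ^ k :=
  stmt_14_general lam n hlam a v hv h
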